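/- Lemma C.6 (Y0): Assume L > 2^d and j < N. Let z and z' be real numbers with 0 < z < 2z'. There exists c > 0, depending only on d, z and z', such that for all ain ∈ (0,c) and aout ∈ [0,ain] the following holds: for every W ∈ P_j(Λ) and every triple (X, (U_B)_{B ∈ B_j(X)}, U_M) ∈ Ycal₀(W), writing U_{M,1}, …, U_{M,n} for the connected components of U_M, one has z'·|X|_j + Σ_{i=1}^n f_j(z, ain, U_{M,i}) ≥ (ain − aout)·|W|_j + f_j(z, aout, W). -/

import Mathlib

/-!
Lemma C.6 (Y0) of "A renormalisation group method. V."

Setting: `Λ = ℤ^d/(L^N·ℤ^d)` with the ℓ∞ metric induced from `ℤ^d`;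
`j`-blocks are the images under the projection of the translates by
`L^j·ℤ^d` of the cube `{x : 0 ≤ xᵢ < L^j}`; polymers are unions of blocks;
`|X|_j` is the number of `j`-blocks in `X`; small sets are connected polymers
of at most `2^d` blocks; `X^□` is the small set neighbourhood;
`f_j(z,a,X) = z + a·(|X|_j − 2^d)₊` for `X ≠ ∅`, `f_j(z,a,∅) = 0`;
`𝒴(W)` is the set of triples `(X, (U_B)_{B∈B_j(X)}, U_M)` with `(U_B)` a
family of pairwise non-touching small sets `U_B ⊇ B`, `U_M` a polymer not
touching `U_J = ⋃_B U_B`, and `X^□ ∪ U_M = W`; and `𝒴₀(W)` omits the triples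
with `X = ∅` and those with `|X|_j = 1` and `U_M = ∅`.
-/

namespace PaperT

/-- The discrete torus `Λ = ℤ^d/(L^N·ℤ^d)`, modelled as `Fin d → ZMod (L^N)`. -/
abbrev Torus (d L N : ℕ) := Fin d → ZMod (L ^ N)

/-- The projection `ℤ^d → Λ`. -/
def proj (d L N : ℕ) (x : Fin d → ℤ) : Torus d L N := fun i => (x i : ZMod (L ^ N))

/-- The cyclic distance on `ZMod n`. -/
def zdist {n : ℕ} (a b : ZMod n) : ℕ := min (a - b).val (b - a).val

/-- The ℓ∞ distance on the torus induced from `ℤ^d`. -/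
def distInf {d L N : ℕ} (x y : Torus d L N) : ℕ :=
  Finset.univ.sup fun i => zdist (x i) (y i)

/-- `k`-blocks of the torus: images under the projection of the translates by
`L^k·ℤ^d` of the cube `{x ∈ ℤ^d : 0 ≤ xᵢ < L^k}`. -/
def IsBlock (d L N k : ℕ) (B : Set (Torus d L N)) : Prop :=
  ∃ m : Fin d → ℤ, B = proj d L N ''
    {x : Fin d → ℤ | ∀ i, (L : ℤ) ^ k * m i ≤ x i ∧ x i < (L : ℤ) ^ k * m i + (L : ℤ) ^ k}

/-- Polymers at scale `k`: unions of `k`-blocks. -/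
def IsPolymer (d L N k : ℕ) (X : Set (Torus d L N)) : Prop :=
  ∃ 𝓑 : Set (Set (Torus d L N)), (∀ B ∈ 𝓑, IsBlock d L N k B) ∧ X = ⋃₀ 𝓑

/-- The set of `k`-blocks contained in `X`. -/
def blocksIn (d L N k : ℕ) (X : Set (Torus d L N)) : Set (Set (Torus d L N)) :=
  {B | IsBlock d L N k B ∧ B ⊆ X}

/-- `|X|_k`: the number of `k`-blocks contained in `X`. -/
noncomputable def size (d L N k : ℕ) (X : Set (Torus d L N)) : ℕ :=
  (blocksIn d L N k X).ncard

/-- A nonempty set is connected if any two of its points are joined by a chain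
of points of the set whose consecutive points are at ℓ∞-distance 1. -/
def SetConnected {d L N : ℕ} (X : Set (Torus d L N)) : Prop :=
  X.Nonempty ∧ ∀ x ∈ X, ∀ y ∈ X, ∃ (n : ℕ) (p : ℕ → Torus d L N),
    p 0 = x ∧ p n = y ∧ (∀ k, k ≤ n → p k ∈ X) ∧
    ∀ k, k < n → distInf (p k) (p (k + 1)) = 1

/-- Two sets touch when their ℓ∞ distance is at most 1. -/
def Touch {d L N : ℕ} (X Y : Set (Torus d L N)) : Prop :=
  ∃ x ∈ X, ∃ y ∈ Y, distInf x y ≤ 1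

/-- The connected components of `X`: its maximal connected subsets. -/
def Comp {d L N : ℕ} (X : Set (Torus d L N)) : Set (Set (Torus d L N)) :=
  {Y | Y ⊆ X ∧ SetConnected Y ∧ ∀ Z, Y ⊆ Z → Z ⊆ X → SetConnected Z → Z = Y}

/-- Small sets at scale `k`: connected polymers of at most `2^d` blocks. -/
def IsSmallSet (d L N k : ℕ) (X : Set (Torus d L N)) : Prop :=
  IsPolymer d L N k X ∧ SetConnected X ∧ size d L N k X ≤ 2 ^ d

/-- The small set neighbourhood `X^□ = ⋃{Y small : Y ∩ X ≠ ∅}`. -/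
def ssn (d L N k : ℕ) (X : Set (Torus d L N)) : Set (Torus d L N) :=
  ⋃₀ {Y | IsSmallSet d L N k Y ∧ (Y ∩ X).Nonempty}

open Classical in
/-- `f_j(z,a,X) = z + a·(|X|_j − 2^d)₊` for nonempty `X`, and `f_j(z,a,∅) = 0`. -/
noncomputable def fwt (d L N k : ℕ) (z a : ℝ) (X : Set (Torus d L N)) : ℝ :=
  if X = ∅ then 0 else z + a * max ((size d L N k X : ℝ) - 2 ^ d) 0

/-- `U_J = ⋃_{B ∈ B_k(X)} U_B`. -/
def UJ (d L N k : ℕ) (X : Set (Torus d L N))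
    (𝒰 : Set (Torus d L N) → Set (Torus d L N)) : Set (Torus d L N) :=
  ⋃ B ∈ blocksIn d L N k X, 𝒰 B

/-- The admissible families `(U_B)_{B ∈ B_k(X)}`: each `U_B` is a small set
containing `B`, and the `U_B` for distinct blocks `B ⊆ X` pairwise do not
touch.  (Families are encoded as functions that take the value `∅` off the
blocks of `X`, so that each family corresponds to exactly one function.) -/
def InUcal (d L N k : ℕ) (X : Set (Torus d L N))
    (𝒰 : Set (Torus d L N) → Set (Torus d L N)) : Prop :=
  (∀ B ∈ blocksIn d L N k X, IsSmallSet d L N k (𝒰 B) ∧ B ⊆ 𝒰 B) ∧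
  (∀ B ∈ blocksIn d L N k X, ∀ B' ∈ blocksIn d L N k X, B ≠ B' →
    ¬ Touch (𝒰 B) (𝒰 B')) ∧
  (∀ B, B ∉ blocksIn d L N k X → 𝒰 B = ∅)

/-- The type of triples `(X, (U_B), U_M)`. -/
abbrev Triple (d L N : ℕ) :=
  Set (Torus d L N) × (Set (Torus d L N) → Set (Torus d L N)) × Set (Torus d L N)

/-- `𝒴(W)`: the triples `(X, (U_B)_{B∈B_k(X)}, U_M)` with `X ∈ P_k(Λ)`,
`(U_B) ∈ 𝒰(X)`, `U_M ∈ P_k(Λ)` not touching `U_J`, and `X^□ ∪ U_M = W`. -/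
def Ycal (d L N k : ℕ) (W : Set (Torus d L N)) : Set (Triple d L N) :=
  {t | IsPolymer d L N k t.1 ∧ InUcal d L N k t.1 t.2.1 ∧
    IsPolymer d L N k t.2.2 ∧ ¬ Touch t.2.2 (UJ d L N k t.1 t.2.1) ∧
    ssn d L N k t.1 ∪ t.2.2 = W}

/-- `𝒴₀(W)`: the triples of `𝒴(W)` other than those with `X = ∅` and those
with `|X|_k = 1` and `U_M = ∅`. -/
def Ycal0 (d L N k : ℕ) (W : Set (Torus d L N)) : Set (Triple d L N) :=
  {t | t ∈ Ycal d L N k W ∧ t.1 ≠ ∅ ∧ ¬ (size d L N k t.1 = 1 ∧ t.2.2 = ∅)}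

set_option linter.unusedSectionVars false

section Basics
variable {d L N j : ℕ}

def IsAnchor (j : ℕ) {d L N : ℕ} (a : Torus d L N) : Prop :=
  ∀ i, ∃ k : ℤ, a i = ((L ^ j * k : ℤ) : ZMod (L ^ N))

def Blk (j : ℕ) {d L N : ℕ} (a : Torus d L N) : Set (Torus d L N) :=
  {y | ∀ i, (y i - a i).val < L ^ j}

noncomputable def anchorOf (j : ℕ) {d L N : ℕ} (y : Torus d L N) : Torus d L N :=
  fun i => ((L ^ j * ((y i).val / L ^ j) : ℕ) : ZMod (L ^ N))

variable (hL : 2 ≤ L) (hjN : j < N)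
include hL hjN

lemma LN_pos : 0 < L ^ N := pow_pos (by omega) N
lemma Lj_pos : 0 < L ^ j := pow_pos (by omega) j
lemma Lj_lt_LN : L ^ j < L ^ N := pow_lt_pow_right₀ (by omega) hjN
lemma Lj_dvd_LN : L ^ j ∣ L ^ N := pow_dvd_pow L (le_of_lt hjN)

lemma neZero_LN : NeZero (L ^ N) := ⟨by have := LN_pos (N := N) hL hjN; omega⟩

lemma natCast_val_eq (x : ZMod (L ^ N)) : ((x.val : ℕ) : ZMod (L ^ N)) = x := by
  haveI := neZero_LN hL hjN
  simp [ZMod.natCast_val, ZMod.cast_id]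

lemma anchorOf_isAnchor (y : Torus d L N) : IsAnchor j (anchorOf j y) := by
  intro i
  refine ⟨(((y i).val / L ^ j : ℕ) : ℤ), ?_⟩
  show ((L ^ j * ((y i).val / L ^ j) : ℕ) : ZMod (L ^ N)) = _
  norm_cast

lemma mem_Blk_anchorOf (y : Torus d L N) : y ∈ Blk j (anchorOf j y) := by
  haveI := neZero_LN hL hjN
  intro i
  set v := (y i).val with hv
  have h1 : y i - anchorOf j y i = ((v % L ^ j : ℕ) : ZMod (L ^ N)) := by
    rw [sub_eq_iff_eq_add]
    show y i = _ + ((L ^ j * (v / L ^ j) : ℕ) : ZMod (L ^ N))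
    rw [← Nat.cast_add, Nat.mod_add_div, hv, natCast_val_eq hL hjN]
  have h2 : v % L ^ j < L ^ j := Nat.mod_lt _ (Lj_pos hL hjN)
  show (y i - anchorOf j y i).val < L ^ j
  rw [h1, ZMod.val_cast_of_lt (lt_trans h2 (Lj_lt_LN hL hjN))]
  exact h2

lemma self_mem_Blk (a : Torus d L N) : a ∈ Blk j a := by
  intro i; simp only [sub_self, ZMod.val_zero]; exact Lj_pos hL hjN

lemma dvd_val_sub {a b : Torus d L N} (ha : IsAnchor j a) (hb : IsAnchor j b) (i : Fin d) :
    L ^ j ∣ (a i - b i).val := by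
  haveI := neZero_LN hL hjN
  obtain ⟨k, hk⟩ := ha i
  obtain ⟨k', hk'⟩ := hb i
  set w := (a i - b i).val with hw
  have h1 : (((w : ℤ) - L ^ j * (k - k') : ℤ) : ZMod (L ^ N)) = 0 := by
    push_cast
    rw [natCast_val_eq hL hjN, hk, hk']
    push_cast
    ring
  rw [ZMod.intCast_zmod_eq_zero_iff_dvd] at h1
  have h1x : ((L : ℤ) ^ N) ∣ ((w : ℤ) - L ^ j * (k - k')) := by exact_mod_cast h1
  have h2 : ((L : ℤ) ^ j) ∣ ((w : ℤ) - L ^ j * (k - k')) :=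
    dvd_trans (pow_dvd_pow (L : ℤ) (le_of_lt hjN)) h1x
  have h3 : ((L : ℤ) ^ j) ∣ (w : ℤ) := by
    have := dvd_add h2 (Dvd.intro (k - k') rfl)
    simpa using this
  exact_mod_cast h3

lemma anchor_unique {a : Torus d L N} (ha : IsAnchor j a) {y : Torus d L N}
    (hy : y ∈ Blk j a) : a = anchorOf j y := by
  haveI := neZero_LN hL hjN
  funext i
  have h0 : (y i - anchorOf j y i).val < L ^ j := mem_Blk_anchorOf hL hjN y i
  have h1 : (y i - a i).val < L ^ j := hy i
  have hd : L ^ j ∣ (anchorOf j y i - a i).val :=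
    dvd_val_sub hL hjN (anchorOf_isAnchor hL hjN y) ha i
  set s := (y i - a i).val with hs
  set t := (y i - anchorOf j y i).val with ht
  have e1 : anchorOf j y i - a i = ((s : ℕ) : ZMod (L ^ N)) - ((t : ℕ) : ZMod (L ^ N)) := by
    rw [hs, ht, natCast_val_eq hL hjN, natCast_val_eq hL hjN]; ring
  have key : anchorOf j y i - a i = 0 := by
    rcases le_or_gt t s with h | h
    · have e2 : anchorOf j y i - a i = ((s - t : ℕ) : ZMod (L ^ N)) := by
        rw [e1, Nat.cast_sub h]
      have hlt : s - t < L ^ N := by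
        have := Lj_lt_LN (j := j) hL hjN; omega
      have hval : (anchorOf j y i - a i).val = s - t := by
        rw [e2, ZMod.val_cast_of_lt hlt]
      rw [hval] at hd
      have hz : s - t = 0 := by
        rcases Nat.eq_zero_or_pos (s - t) with h' | h'
        · exact h'
        · exact absurd (Nat.le_of_dvd h' hd) (by omega)
      rw [e2, hz]; simp
    · exfalso
      have e2 : anchorOf j y i - a i = -(((t - s : ℕ) : ℕ) : ZMod (L ^ N)) := by
        rw [e1, Nat.cast_sub (le_of_lt h)]
        ring
      have hu : 0 < t - s ∧ t - s < L ^ N := by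
        have := Lj_lt_LN (j := j) hL hjN; omega
      have hne : (((t - s : ℕ) : ℕ) : ZMod (L ^ N)) ≠ 0 := by
        intro hc
        rw [ZMod.natCast_eq_zero_iff] at hc
        exact absurd (Nat.le_of_dvd hu.1 hc) (by omega)
      have hval : (anchorOf j y i - a i).val = L ^ N - (t - s) := by
        rw [e2, ZMod.neg_val, if_neg hne, ZMod.val_cast_of_lt hu.2]
      rw [hval] at hd
      obtain ⟨q, hq⟩ := hd
      obtain ⟨Q, hQ⟩ := Lj_dvd_LN (j := j) hL hjN
      have hjpos := Lj_pos (j := j) hL hjN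
      have hjlt := Lj_lt_LN (j := j) hL hjN
      have h1lt : t - s < L ^ j := by omega
      have h5 : L ^ j * q + (t - s) = L ^ j * Q := by omega
      have h7 : q < Q := by
        rcases Nat.lt_or_ge q Q with h' | h'
        · exact h'
        · exfalso
          have := Nat.mul_le_mul_left (L ^ j) h'
          omega
      have h8 : L ^ j * (q + 1) ≤ L ^ j * Q := Nat.mul_le_mul_left _ h7
      have h9 : L ^ j * (q + 1) = L ^ j * q + L ^ j := by ring
      omega
  rw [sub_eq_zero] at key
  exact key.symm

lemma intCast_nonneg_eq (w : ℤ) (h0 : 0 ≤ w) :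
    ((w : ℤ) : ZMod (L ^ N)) = ((w.toNat : ℕ) : ZMod (L ^ N)) := by
  conv_lhs => rw [← Int.toNat_of_nonneg h0]
  push_cast
  ring

lemma isBlock_iff {B : Set (Torus d L N)} :
    IsBlock d L N j B ↔ ∃ a : Torus d L N, IsAnchor j a ∧ B = Blk j a := by
  haveI := neZero_LN hL hjN
  have hc : ((L ^ j : ℕ) : ℤ) = (L : ℤ) ^ j := by push_cast; ring
  have hjlt := Lj_lt_LN (j := j) hL hjN
  constructor
  · rintro ⟨m, rfl⟩
    refine ⟨fun i => ((L ^ j * m i : ℤ) : ZMod (L ^ N)), fun i => ⟨m i, rfl⟩, ?_⟩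
    ext y
    constructor
    · rintro ⟨x, hx, rfl⟩
      intro i
      have h1 := (hx i).1
      have h2 := (hx i).2
      have e1 : proj d L N x i - ((L ^ j * m i : ℤ) : ZMod (L ^ N)) =
          (((x i - L ^ j * m i).toNat : ℕ) : ZMod (L ^ N)) := by
        rw [← intCast_nonneg_eq hL hjN _ (by linarith)]
        show (x i : ZMod (L ^ N)) - _ = _
        push_cast
        ring
      rw [e1, ZMod.val_cast_of_lt] <;> omega
    · intro hy
      refine ⟨fun i => L ^ j * m i + ((y i - ((L ^ j * m i : ℤ) : ZMod (L ^ N))).val : ℕ), fun i => ?_, ?_⟩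
      · have := hy i
        dsimp only at this ⊢
        constructor <;> omega
      · funext i
        show ((L ^ j * m i + _ : ℤ) : ZMod (L ^ N)) = y i
        push_cast
        rw [natCast_val_eq hL hjN]
        ring
  · rintro ⟨a, ha, rfl⟩
    choose m hm using ha
    refine ⟨m, ?_⟩
    ext y
    constructor
    · intro hy
      refine ⟨fun i => L ^ j * m i + ((y i - a i).val : ℕ), fun i => ?_, ?_⟩
      · have := hy i
        dsimp only at this ⊢
        constructor <;> omega
      · funext i
        show ((L ^ j * m i + _ : ℤ) : ZMod (L ^ N)) = y i
        push_cast
        rw [natCast_val_eq hL hjN, hm i]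
        push_cast
        ring
    · rintro ⟨x, hx, rfl⟩
      intro i
      have h1 := (hx i).1
      have h2 := (hx i).2
      have e1 : proj d L N x i - a i = (((x i - L ^ j * m i).toNat : ℕ) : ZMod (L ^ N)) := by
        rw [← intCast_nonneg_eq hL hjN _ (by linarith), hm i]
        show (x i : ZMod (L ^ N)) - _ = _
        push_cast
        ring
      rw [e1, ZMod.val_cast_of_lt] <;> omega

lemma Blk_isBlock {a : Torus d L N} (ha : IsAnchor j a) : IsBlock d L N j (Blk j a) :=
  (isBlock_iff hL hjN).mpr ⟨a, ha, rfl⟩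

lemma Blk_polymer {a : Torus d L N} (ha : IsAnchor j a) : IsPolymer d L N j (Blk j a) :=
  ⟨{Blk j a}, by simpa using Blk_isBlock hL hjN ha, by simp⟩

lemma polymer_blk_subset {X : Set (Torus d L N)} (hX : IsPolymer d L N j X)
    {y : Torus d L N} (hy : y ∈ X) : Blk j (anchorOf j y) ⊆ X := by
  obtain ⟨𝓑, h𝓑, rfl⟩ := hX
  obtain ⟨B, hB, hyB⟩ := hy
  obtain ⟨a, ha, rfl⟩ := (isBlock_iff hL hjN).mp (h𝓑 B hB)
  rw [← anchor_unique hL hjN ha hyB]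
  exact Set.subset_sUnion_of_mem hB

def anch (j : ℕ) {d L N : ℕ} (X : Set (Torus d L N)) : Set (Torus d L N) :=
  {a | IsAnchor j a ∧ Blk j a ⊆ X}

lemma blocksIn_eq (X : Set (Torus d L N)) :
    {B | IsBlock d L N j B ∧ B ⊆ X} = Blk j '' anch j X := by
  ext B
  constructor
  · rintro ⟨hB, hBX⟩
    obtain ⟨a, ha, rfl⟩ := (isBlock_iff hL hjN).mp hB
    exact ⟨a, ⟨ha, hBX⟩, rfl⟩
  · rintro ⟨a, ⟨ha, haX⟩, rfl⟩
    exact ⟨Blk_isBlock hL hjN ha, haX⟩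

lemma Blk_inj {a b : Torus d L N} (ha : IsAnchor j a) (hb : IsAnchor j b)
    (h : Blk j a = Blk j b) : a = b := by
  have h1 : a = anchorOf j a := anchor_unique hL hjN ha (self_mem_Blk hL hjN a)
  have h2 : b = anchorOf j a := anchor_unique hL hjN hb (h ▸ self_mem_Blk hL hjN a)
  rw [h1, h2]
omit hL hjN in
lemma zdist_comm {n : ℕ} (a b : ZMod n) : zdist a b = zdist b a := by
  rw [zdist, zdist, min_comm]

omit hL hjN in
lemma zdist_self {n : ℕ} (a : ZMod n) : zdist a a = 0 := by
  simp [zdist]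

lemma zdist_triangle (a b c : ZMod (L ^ N)) :
    zdist a c ≤ zdist a b + zdist b c := by
  haveI := neZero_LN hL hjN
  have hvadd : ∀ x y : ZMod (L ^ N), (x + y).val ≤ x.val + y.val := ZMod.val_add_le
  have hac : a - c = (a - b) + (b - c) := by ring
  have hca : c - a = (c - b) + (b - a) := by ring
  have h1 : (a - c).val ≤ (a - b).val + (b - c).val := by rw [hac]; exact hvadd _ _
  have h2 : (c - a).val ≤ (c - b).val + (b - a).val := by rw [hca]; exact hvadd _ _
  rcases le_total (a - b).val (b - a).val with hab | hab <;>
    rcases le_total (b - c).val (c - b).val with hbc | hbc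
  · calc zdist a c ≤ (a - c).val := min_le_left _ _
      _ ≤ _ := by rw [zdist, zdist, min_eq_left hab, min_eq_left hbc]; omega
  · -- mins are (a-b).val and (c-b).val; same-direction trick
    have e1 : a - b = (((a - b).val : ℕ) : ZMod (L ^ N)) := (natCast_val_eq hL hjN _).symm
    have e2 : c - b = (((c - b).val : ℕ) : ZMod (L ^ N)) := (natCast_val_eq hL hjN _).symm
    rcases le_total (c - b).val (a - b).val with h | h
    · have e3 : a - c = (((a - b).val - (c - b).val : ℕ) : ZMod (L ^ N)) := by
        rw [Nat.cast_sub h, ← e1, ← e2]; ring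
      have hlt : (a - b).val - (c - b).val < L ^ N := by
        have := ZMod.val_lt (a - b); omega
      have : (a - c).val = (a - b).val - (c - b).val := by rw [e3, ZMod.val_cast_of_lt hlt]
      calc zdist a c ≤ (a - c).val := min_le_left _ _
        _ ≤ _ := by rw [zdist, zdist, min_eq_left hab, min_eq_right hbc]; omega
    · have e3 : c - a = (((c - b).val - (a - b).val : ℕ) : ZMod (L ^ N)) := by
        rw [Nat.cast_sub h, ← e1, ← e2]; ring
      have hlt : (c - b).val - (a - b).val < L ^ N := by
        have := ZMod.val_lt (c - b); omega
      have : (c - a).val = (c - b).val - (a - b).val := by rw [e3, ZMod.val_cast_of_lt hlt]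
      calc zdist a c ≤ (c - a).val := min_le_right _ _
        _ ≤ _ := by rw [zdist, zdist, min_eq_left hab, min_eq_right hbc]; omega
  · -- mins are (b-a).val and (b-c).val
    have e1 : b - a = (((b - a).val : ℕ) : ZMod (L ^ N)) := (natCast_val_eq hL hjN _).symm
    have e2 : b - c = (((b - c).val : ℕ) : ZMod (L ^ N)) := (natCast_val_eq hL hjN _).symm
    rcases le_total (b - c).val (b - a).val with h | h
    · have e3 : c - a = (((b - a).val - (b - c).val : ℕ) : ZMod (L ^ N)) := by
        rw [Nat.cast_sub h, ← e1, ← e2]; ring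
      have hlt : (b - a).val - (b - c).val < L ^ N := by
        have := ZMod.val_lt (b - a); omega
      have : (c - a).val = (b - a).val - (b - c).val := by rw [e3, ZMod.val_cast_of_lt hlt]
      calc zdist a c ≤ (c - a).val := min_le_right _ _
        _ ≤ _ := by rw [zdist, zdist, min_eq_right hab, min_eq_left hbc]; omega
    · have e3 : a - c = (((b - c).val - (b - a).val : ℕ) : ZMod (L ^ N)) := by
        rw [Nat.cast_sub h, ← e1, ← e2]; ring
      have hlt : (b - c).val - (b - a).val < L ^ N := by
        have := ZMod.val_lt (b - c); omega
      have : (a - c).val = (b - c).val - (b - a).val := by rw [e3, ZMod.val_cast_of_lt hlt]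
      calc zdist a c ≤ (a - c).val := min_le_left _ _
        _ ≤ _ := by rw [zdist, zdist, min_eq_right hab, min_eq_left hbc]; omega
  · calc zdist a c ≤ (c - a).val := min_le_right _ _
      _ ≤ _ := by rw [zdist, zdist, min_eq_right hab, min_eq_right hbc]; omega

omit hL hjN in
lemma distInf_comm (x y : Torus d L N) : distInf x y = distInf y x := by
  unfold distInf; congr 1; funext i; exact zdist_comm _ _

omit hL hjN in
lemma zdist_le_distInf (x y : Torus d L N) (i : Fin d) : zdist (x i) (y i) ≤ distInf x y :=
  Finset.le_sup (f := fun i => zdist (x i) (y i)) (Finset.mem_univ i)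

omit hL hjN in
lemma distInf_le (x y : Torus d L N) (r : ℕ) (h : ∀ i, zdist (x i) (y i) ≤ r) :
    distInf x y ≤ r := Finset.sup_le fun i _ => h i

lemma distInf_triangle (x y z : Torus d L N) :
    distInf x z ≤ distInf x y + distInf y z := by
  apply distInf_le
  intro i
  calc zdist (x i) (z i) ≤ zdist (x i) (y i) + zdist (y i) (z i) := zdist_triangle hL hjN _ _ _
    _ ≤ _ := Nat.add_le_add (zdist_le_distInf _ _ i) (zdist_le_distInf _ _ i)

/-- if two blocks contain points at distance ≤ 1, their anchors are at distance ≤ L^j. -/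
lemma touch_anchor_dist {a b : Torus d L N} (ha : IsAnchor j a) (hb : IsAnchor j b)
    {y y' : Torus d L N} (hy : y ∈ Blk j a) (hy' : y' ∈ Blk j b)
    (hd : distInf y y' ≤ 1) : distInf a b ≤ L ^ j := by
  haveI := neZero_LN hL hjN
  apply distInf_le
  intro i
  have h1 : (y i - a i).val < L ^ j := hy i
  have h2 : (y' i - b i).val < L ^ j := hy' i
  have h3 : zdist (y i) (y' i) ≤ 1 := le_trans (zdist_le_distInf y y' i) hd
  -- a i - b i = (y i - y' i) - (y i - a i) + (y' i - b i), as cast of small integer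
  have key : ∃ t : ℤ, a i - b i = (t : ZMod (L ^ N)) ∧ t.natAbs ≤ L ^ j := by
    rcases le_or_gt (y i - y' i).val 1 with h4 | h4
    · refine ⟨((y i - y' i).val : ℤ) - ((y i - a i).val : ℤ) + ((y' i - b i).val : ℤ), ?_, ?_⟩
      · push_cast
        rw [natCast_val_eq hL hjN, natCast_val_eq hL hjN, natCast_val_eq hL hjN]
        ring
      · omega
    · have h5 : (y' i - y i).val ≤ 1 := by
        rcases (min_le_iff.mp h3) with h | h
        · omega
        · exact h
      refine ⟨-((y' i - y i).val : ℤ) - ((y i - a i).val : ℤ) + ((y' i - b i).val : ℤ), ?_, ?_⟩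
      · push_cast
        rw [natCast_val_eq hL hjN, natCast_val_eq hL hjN, natCast_val_eq hL hjN]
        ring
      · omega
  obtain ⟨t, ht, habs⟩ := key
  have hjlt := Lj_lt_LN (j := j) hL hjN
  rcases le_or_gt 0 t with h6 | h6
  · have e1 : a i - b i = ((t.toNat : ℕ) : ZMod (L ^ N)) := by
      rw [ht, intCast_nonneg_eq hL hjN t h6]
    have hlt : t.toNat < L ^ N := by omega
    have : (a i - b i).val = t.toNat := by rw [e1, ZMod.val_cast_of_lt hlt]
    calc zdist (a i) (b i) ≤ (a i - b i).val := min_le_left _ _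
      _ ≤ L ^ j := by omega
  · have e1 : b i - a i = (((-t).toNat : ℕ) : ZMod (L ^ N)) := by
      rw [← intCast_nonneg_eq hL hjN (-t) (by omega)]
      push_cast
      linear_combination -ht
    have hlt : (-t).toNat < L ^ N := by omega
    have : (b i - a i).val = (-t).toNat := by rw [e1, ZMod.val_cast_of_lt hlt]
    calc zdist (a i) (b i) ≤ (b i - a i).val := min_le_right _ _
      _ ≤ L ^ j := by omega
omit hL hjN in
lemma distInf_self (x : Torus d L N) : distInf x x = 0 := by
  apply Nat.le_antisymm _ (Nat.zero_le _)
  apply distInf_le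
  intro i
  simp [zdist_self]

def Chain {d L N : ℕ} (S : Set (Torus d L N)) (x y : Torus d L N) : Prop :=
  ∃ (n : ℕ) (p : ℕ → Torus d L N), p 0 = x ∧ p n = y ∧ (∀ k, k ≤ n → p k ∈ S) ∧
    ∀ k, k < n → distInf (p k) (p (k + 1)) = 1

omit hL hjN in
lemma chain_refl {S : Set (Torus d L N)} {x : Torus d L N} (hx : x ∈ S) : Chain S x x :=
  ⟨0, fun _ => x, rfl, rfl, fun _ _ => hx, fun k hk => absurd hk (by omega)⟩

omit hL hjN in
lemma chain_mono {S T : Set (Torus d L N)} (hST : S ⊆ T) {x y : Torus d L N}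
    (h : Chain S x y) : Chain T x y := by
  obtain ⟨n, p, h0, h1, h2, h3⟩ := h
  exact ⟨n, p, h0, h1, fun k hk => hST (h2 k hk), h3⟩

omit hL hjN in
lemma chain_symm {S : Set (Torus d L N)} {x y : Torus d L N} (h : Chain S x y) :
    Chain S y x := by
  obtain ⟨n, p, h0, h1, h2, h3⟩ := h
  refine ⟨n, fun k => p (n - k), by simpa using h1, by simpa using h0,
    fun k hk => h2 _ (by omega), fun k hk => ?_⟩
  show distInf (p (n - k)) (p (n - (k + 1))) = 1
  have e : n - k = (n - (k + 1)) + 1 := by omega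
  rw [e, distInf_comm]
  exact h3 _ (by omega)

omit hL hjN in
lemma chain_trans {S : Set (Torus d L N)} {x y z : Torus d L N} (h : Chain S x y)
    (h' : Chain S y z) : Chain S x z := by
  obtain ⟨n, p, h0, h1, h2, h3⟩ := h
  obtain ⟨m, q, g0, g1, g2, g3⟩ := h'
  refine ⟨n + m, fun k => if k < n then p k else q (k - n), ?_, ?_, ?_, ?_⟩
  · show (if 0 < n then p 0 else q (0 - n)) = x
    by_cases hn : 0 < n
    · simp [hn, h0]
    · have hn0 : n = 0 := by omega
      have : q (0 - n) = y := by rw [hn0]; simpa using g0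
      rw [if_neg hn, this, ← h1, hn0, h0]
  · show (if n + m < n then p (n + m) else q (n + m - n)) = z
    have hlt : ¬ (n + m < n) := by omega
    rw [if_neg hlt]
    simpa using g1
  · intro k hk
    show (if k < n then p k else q (k - n)) ∈ S
    by_cases hkn : k < n
    · rw [if_pos hkn]; exact h2 _ (by omega)
    · rw [if_neg hkn]; exact g2 _ (by omega)
  · intro k hk
    show distInf (if k < n then p k else q (k - n))
      (if k + 1 < n then p (k + 1) else q (k + 1 - n)) = 1
    by_cases hk1 : k + 1 < n
    · rw [if_pos hk1, if_pos (by omega : k < n)]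
      exact h3 _ (by omega)
    · by_cases hkn : k < n
      · have hk1n : k + 1 = n := by omega
        rw [if_pos hkn, if_neg hk1]
        have hq : q (k + 1 - n) = p n := by
          rw [hk1n]
          simp only [Nat.sub_self]
          rw [g0, h1]
        rw [hq, ← hk1n]
        exact h3 _ (by omega)
      · rw [if_neg hk1, if_neg hkn]
        have e : k + 1 - n = (k - n) + 1 := by omega
        rw [e]
        exact g3 _ (by omega)
lemma seq_bound (p : ℕ → Torus d L N) (s : ℕ)
    (hstep : ∀ k, distInf (p k) (p (k + 1)) ≤ s) :
    ∀ n, distInf (p 0) (p n) ≤ ((p '' Set.Iic n).ncard - 1) * s := by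
  intro n
  induction n using Nat.strong_induction_on with
  | _ n ih =>
    match n with
    | 0 => simp [distInf_self]
    | (n + 1) =>
      by_cases hmem : p (n + 1) ∈ p '' Set.Iic n
      · obtain ⟨t, ht, hpt⟩ := hmem
        calc distInf (p 0) (p (n + 1)) = distInf (p 0) (p t) := by rw [hpt]
          _ ≤ ((p '' Set.Iic t).ncard - 1) * s := ih t (by simpa using Nat.lt_succ_of_le ht)
          _ ≤ ((p '' Set.Iic (n + 1)).ncard - 1) * s := by
              apply Nat.mul_le_mul_right
              have hsub : p '' Set.Iic t ⊆ p '' Set.Iic (n + 1) := by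
                apply Set.image_mono
                intro u hu
                have ht' : t ≤ n := ht
                simp only [Set.mem_Iic] at hu ⊢
                omega
              have := Set.ncard_le_ncard hsub (Set.toFinite _)
              omega
      · have hins : p '' Set.Iic (n + 1) = insert (p (n + 1)) (p '' Set.Iic n) := by
          have : Set.Iic (n + 1) = insert (n + 1) (Set.Iic n) := by
            ext u; simp; omega
          rw [this, Set.image_insert_eq]
        have hcard : (p '' Set.Iic (n + 1)).ncard = (p '' Set.Iic n).ncard + 1 := by
          rw [hins, Set.ncard_insert_of_notMem hmem (Set.toFinite _)]
        have hpos : 1 ≤ (p '' Set.Iic n).ncard := by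
          have : (p '' Set.Iic n).Nonempty := ⟨p 0, ⟨0, by simp, rfl⟩⟩
          have := (Set.ncard_pos (Set.toFinite _)).mpr this
          omega
        calc distInf (p 0) (p (n + 1))
            ≤ distInf (p 0) (p n) + distInf (p n) (p (n + 1)) := distInf_triangle hL hjN _ _ _
          _ ≤ ((p '' Set.Iic n).ncard - 1) * s + s := Nat.add_le_add (ih n (by omega)) (hstep n)
          _ ≤ ((p '' Set.Iic (n + 1)).ncard - 1) * s := by
              rw [hcard]
              have e : ((p '' Set.Iic n).ncard - 1) * s + s
                  = ((p '' Set.Iic n).ncard - 1 + 1) * s := by ring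
              rw [e]
              apply Nat.mul_le_mul_right
              omega

omit hjN in
lemma size_eq (X : Set (Torus d L N)) (hjN : j < N) :
    size d L N j X = (anch j X).ncard := by
  show (blocksIn d L N j X).ncard = _
  have : blocksIn d L N j X = Blk j '' anch j X := blocksIn_eq hL hjN X
  rw [this]
  apply Set.ncard_image_of_injOn
  intro a ha b hb hab
  exact Blk_inj hL hjN ha.1 hb.1 hab

lemma blk_chain (a : Torus d L N) : ∀ (M : ℕ) (y : Torus d L N), y ∈ Blk j a →
    (∑ i, (y i - a i).val) = M → Chain (Blk j a) a y := by
  haveI := neZero_LN hL hjN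
  have hLN2 : 2 ≤ L ^ N := by
    have h1 : L ^ 1 ≤ L ^ N := Nat.pow_le_pow_right (by omega) (by omega)
    rw [pow_one] at h1
    omega
  intro M
  induction M using Nat.strong_induction_on with
  | _ M ih =>
    intro y hy hM
    by_cases h0 : ∀ i, (y i - a i).val = 0
    · have hya : y = a := by
        funext i
        have h1 : y i - a i = 0 := by
          have := natCast_val_eq hL hjN (y i - a i)
          rw [h0 i] at this
          simpa using this.symm
        exact sub_eq_zero.mp h1
      rw [hya]
      exact chain_refl (self_mem_Blk hL hjN a)
    · push_neg at h0
      obtain ⟨i, hi⟩ := h0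
      set v := (y i - a i).val with hv
      have hvpos : 0 < v := Nat.pos_of_ne_zero hi
      have hvlt : v < L ^ j := hy i
      have hjlt := Lj_lt_LN (j := j) hL hjN
      set y' := Function.update y i (y i - 1) with hy'def
      have hdiff : y' i - a i = ((v - 1 : ℕ) : ZMod (L ^ N)) := by
        rw [hy'def]
        simp only [Function.update_self]
        rw [Nat.cast_sub hvpos, Nat.cast_one, hv, natCast_val_eq hL hjN]
        ring
      have hy'mem : y' ∈ Blk j a := by
        intro i'
        by_cases hii : i' = i
        · subst hii
          rw [hdiff, ZMod.val_cast_of_lt (by omega)]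
          omega
        · rw [hy'def]
          simp only [Function.update_of_ne hii]
          exact hy i'
      have hsum : (∑ i', (y' i' - a i').val) = M - 1 := by
        have h1 : ∀ i' ∈ Finset.univ.erase i, (y' i' - a i').val = (y i' - a i').val := by
          intro i' hi'
          rw [hy'def]
          simp only [Function.update_of_ne (Finset.ne_of_mem_erase hi')]
        have h2 : (y' i - a i).val = v - 1 := by
          rw [hdiff, ZMod.val_cast_of_lt (by omega)]
        rw [← Finset.add_sum_erase _ _ (Finset.mem_univ i), h2, Finset.sum_congr rfl h1]
        rw [← Finset.add_sum_erase _ _ (Finset.mem_univ i)] at hM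
        omega
      have hstep : distInf y' y = 1 := by
        have hzi : zdist (y' i) (y i) = 1 := by
          have e1 : y i - y' i = 1 := by
            rw [hy'def]; simp only [Function.update_self]; ring
          have e2 : y' i - y i = -1 := by
            rw [hy'def]; simp only [Function.update_self]; ring
          rw [zdist, e1, e2]
          have hval1 : (1 : ZMod (L ^ N)).val = 1 := by
            rw [← Nat.cast_one, ZMod.val_cast_of_lt (by omega)]
          have hvalneg : (-1 : ZMod (L ^ N)).val = L ^ N - 1 := by
            have : (-1 : ZMod (L ^ N)) = (((L ^ N - 1 : ℕ) : ℕ) : ZMod (L ^ N)) := by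
              have : ((L ^ N : ℕ) : ZMod (L ^ N)) = 0 := by
                simpa using ZMod.natCast_self (L ^ N)
              rw [Nat.cast_sub (by omega), this]
              simp
            rw [this, ZMod.val_cast_of_lt (by omega)]
          rw [hval1, hvalneg]
          omega
        apply le_antisymm
        · apply distInf_le
          intro i'
          by_cases hii : i' = i
          · subst hii; omega
          · rw [hy'def]
            simp only [Function.update_of_ne hii]
            rw [zdist_self]
            omega
        · calc 1 = zdist (y' i) (y i) := hzi.symm
            _ ≤ distInf y' y := zdist_le_distInf _ _ i
      have hvM : v ≤ M := by
        rw [← hM, hv]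
        exact Finset.single_le_sum (f := fun i' => (y i' - a i').val)
          (fun i' _ => Nat.zero_le _) (Finset.mem_univ i)
      have hchain1 : Chain (Blk j a) a y' := ih (M - 1) (by omega) y' hy'mem hsum
      have hchain2 : Chain (Blk j a) y' y :=
        ⟨1, fun k => if k = 0 then y' else y, by simp, by simp, fun k hk => by
          by_cases hk0 : k = 0
          · simp [hk0, hy'mem]
          · simp [hk0, hy]
        , fun k hk => by
          have : k = 0 := by omega
          simp only [this, if_true, if_neg (by omega : ¬ (0 + 1 = 0))]
          exact hstep⟩
      exact chain_trans hchain1 hchain2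

lemma blk_connected (a : Torus d L N) : SetConnected (Blk j a) := by
  refine ⟨⟨a, self_mem_Blk hL hjN a⟩, fun x hx y hy => ?_⟩
  exact chain_trans (chain_symm (blk_chain hL hjN a _ x hx rfl)) (blk_chain hL hjN a _ y hy rfl)
omit hL hjN in
lemma setConnected_singleton (x : Torus d L N) : SetConnected ({x} : Set (Torus d L N)) := by
  refine ⟨⟨x, rfl⟩, fun u hu v hv => ?_⟩
  rw [Set.mem_singleton_iff] at hu hv
  subst hu; subst hv
  exact chain_refl rfl

omit hL hjN in
lemma setConnected_union {X Y : Set (Torus d L N)} (hX : SetConnected X) (hY : SetConnected Y)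
    {w : Torus d L N} (hwX : w ∈ X) (hwY : w ∈ Y) : SetConnected (X ∪ Y) := by
  refine ⟨⟨w, Or.inl hwX⟩, fun u hu v hv => ?_⟩
  have cu : Chain (X ∪ Y) u w := by
    rcases hu with hu | hu
    · exact chain_mono Set.subset_union_left (hX.2 u hu w hwX)
    · exact chain_mono Set.subset_union_right (hY.2 u hu w hwY)
  have cv : Chain (X ∪ Y) w v := by
    rcases hv with hv | hv
    · exact chain_mono Set.subset_union_left (hX.2 w hwX v hv)
    · exact chain_mono Set.subset_union_right (hY.2 w hwY v hv)
  exact chain_trans cu cv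

omit hL hjN in
lemma exists_comp {S : Set (Torus d L N)} {x : Torus d L N} (hx : x ∈ S)
    [Finite (Torus d L N)] : ∃ Y ∈ Comp S, x ∈ Y := by
  set F : Set (Set (Torus d L N)) := {Z | x ∈ Z ∧ Z ⊆ S ∧ SetConnected Z} with hF
  have hne : F.Nonempty := ⟨{x}, rfl, by simpa using hx, setConnected_singleton x⟩
  obtain ⟨Z₀, hZ₀, hmax⟩ := Set.Finite.exists_maximalFor (fun Z => Z.ncard) F (Set.toFinite F) hne
  refine ⟨Z₀, ⟨hZ₀.2.1, hZ₀.2.2, fun Z hZZ hZS hZc => ?_⟩, hZ₀.1⟩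
  have hZF : Z ∈ F := ⟨hZZ hZ₀.1, hZS, hZc⟩
  have hle : Z₀.ncard ≤ Z.ncard := Set.ncard_le_ncard hZZ (Set.toFinite _)
  have heq := le_antisymm hle (hmax hZF hle)
  exact (Set.eq_of_subset_of_ncard_le hZZ (le_of_eq heq.symm) (Set.toFinite _)).symm

/-- every anchor of a polymer `U` lies in the anchors of some component of `U`. -/
lemma anch_subset_comps {U : Set (Torus d L N)} (hU : IsPolymer d L N j U) :
    anch j U ⊆ ⋃ Y ∈ Comp U, anch j Y := by
  haveI := neZero_LN hL hjN
  haveI : Finite (Torus d L N) := by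
    haveI := ZMod.fintype (L ^ N)
    infer_instance
  rintro a ⟨ha, haU⟩
  have haa : a ∈ U := haU (self_mem_Blk hL hjN a)
  obtain ⟨Y, hY, haY⟩ := exists_comp haa
  refine Set.mem_biUnion hY ⟨ha, ?_⟩
  -- Blk j a ⊆ Y by maximality
  have hconn : SetConnected (Y ∪ Blk j a) :=
    setConnected_union hY.2.1 (blk_connected hL hjN a) haY (self_mem_Blk hL hjN a)
  have hsub : Y ∪ Blk j a ⊆ U := Set.union_subset hY.1 haU
  have := hY.2.2 (Y ∪ Blk j a) Set.subset_union_left hsub hconn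
  rw [← this]
  exact Set.subset_union_right

omit hL hjN in
lemma comps_nonempty {S : Set (Torus d L N)} (hS : S.Nonempty) [Finite (Torus d L N)] :
    (Comp S).Nonempty := by
  obtain ⟨x, hx⟩ := hS
  obtain ⟨Y, hY, _⟩ := exists_comp hx
  exact ⟨Y, hY⟩

lemma sUnion_polymer {𝓢 : Set (Set (Torus d L N))} (h : ∀ Y ∈ 𝓢, IsPolymer d L N j Y) :
    IsPolymer d L N j (⋃₀ 𝓢) := by
  choose 𝓑 h𝓑 hYeq using h
  refine ⟨⋃ Y : 𝓢, 𝓑 Y.1 Y.2, ?_, ?_⟩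
  · rintro B hB
    simp only [Set.mem_iUnion] at hB
    obtain ⟨⟨Y, hY⟩, hBY⟩ := hB
    exact h𝓑 Y hY B hBY
  · ext y
    constructor
    · rintro ⟨Y, hY, hyY⟩
      rw [hYeq Y hY] at hyY
      obtain ⟨B, hB, hyB⟩ := hyY
      exact ⟨B, Set.mem_iUnion.mpr ⟨⟨Y, hY⟩, hB⟩, hyB⟩
    · rintro ⟨B, hB, hyB⟩
      obtain ⟨⟨Y, hY⟩, hBY⟩ := Set.mem_iUnion.mp hB
      refine ⟨Y, hY, ?_⟩
      rw [hYeq Y hY]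
      exact ⟨B, hBY, hyB⟩

lemma ssn_polymer (X : Set (Torus d L N)) : IsPolymer d L N j (ssn d L N j X) :=
  sUnion_polymer hL hjN fun Y hY => hY.1.1

lemma anch_dist_of_connected {Y : Set (Torus d L N)} (hY : IsPolymer d L N j Y)
    (hconn : SetConnected Y) {y x : Torus d L N} (hy : y ∈ Y) (hx : x ∈ Y) :
    distInf (anchorOf j y) (anchorOf j x) ≤ ((anch j Y).ncard - 1) * L ^ j := by
  haveI := neZero_LN hL hjN
  haveI : Finite (Torus d L N) := by
    haveI := ZMod.fintype (L ^ N)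
    infer_instance
  obtain ⟨n, p, h0, h1, h2, h3⟩ := hconn.2 y hy x hx
  set A := fun k => anchorOf j (p (min k n)) with hA
  have hstep : ∀ k, distInf (A k) (A (k + 1)) ≤ L ^ j := by
    intro k
    by_cases hk : k < n
    · have e1 : min k n = k := by omega
      have e2 : min (k + 1) n = k + 1 := by omega
      show distInf (anchorOf j (p (min k n))) (anchorOf j (p (min (k + 1) n))) ≤ L ^ j
      rw [e1, e2]
      exact touch_anchor_dist hL hjN (anchorOf_isAnchor hL hjN _) (anchorOf_isAnchor hL hjN _)
        (mem_Blk_anchorOf hL hjN _) (mem_Blk_anchorOf hL hjN _) (le_of_eq (h3 k hk))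
    · have e : min k n = min (k + 1) n := by omega
      show distInf (anchorOf j (p (min k n))) (anchorOf j (p (min (k + 1) n))) ≤ L ^ j
      rw [e, distInf_self]
      omega
  have hbound := seq_bound hL hjN A (L ^ j) hstep n
  have hsub : A '' Set.Iic n ⊆ anch j Y := by
    rintro _ ⟨k, _, rfl⟩
    exact ⟨anchorOf_isAnchor hL hjN _, polymer_blk_subset hL hjN hY (h2 _ (min_le_right k n))⟩
  have hcard : (A '' Set.Iic n).ncard ≤ (anch j Y).ncard :=
    Set.ncard_le_ncard hsub (Set.toFinite _)
  have hA0 : A 0 = anchorOf j y := by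
    show anchorOf j (p (min 0 n)) = _
    rw [Nat.zero_min, h0]
  have hAn : A n = anchorOf j x := by
    show anchorOf j (p (min n n)) = _
    rw [min_self, h1]
  calc distInf (anchorOf j y) (anchorOf j x) = distInf (A 0) (A n) := by rw [hA0, hAn]
    _ ≤ ((A '' Set.Iic n).ncard - 1) * L ^ j := hbound
    _ ≤ ((anch j Y).ncard - 1) * L ^ j := Nat.mul_le_mul_right _ (by omega)
lemma ball_count {b : Torus d L N} (hb : IsAnchor j b) (R : ℕ) :
    {a : Torus d L N | IsAnchor j a ∧ distInf a b ≤ R * L ^ j}.ncard ≤ (2 * R + 1) ^ d := by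
  haveI := neZero_LN hL hjN
  haveI : Finite (Torus d L N) := by
    haveI := ZMod.fintype (L ^ N)
    infer_instance
  have hjpos := Lj_pos (j := j) hL hjN
  set g : (Fin d → ℤ) → Torus d L N := fun k i => b i + ((L ^ j * k i : ℤ) : ZMod (L ^ N)) with hg
  set T : Finset (Fin d → ℤ) := Fintype.piFinset (fun _ => Finset.Icc (-(R : ℤ)) R) with hT
  have hsub : {a : Torus d L N | IsAnchor j a ∧ distInf a b ≤ R * L ^ j} ⊆ g '' ↑T := by
    rintro a ⟨ha, hdist⟩
    set k : Fin d → ℤ := fun i =>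
      if (a i - b i).val ≤ R * L ^ j then (((a i - b i).val / L ^ j : ℕ) : ℤ)
      else -(((b i - a i).val / L ^ j : ℕ) : ℤ) with hk
    have hprop : ∀ i, k i ∈ Finset.Icc (-(R : ℤ)) R ∧ b i + ((L ^ j * k i : ℤ) : ZMod (L ^ N)) = a i := by
      intro i
      have hzd : zdist (a i) (b i) ≤ R * L ^ j := le_trans (zdist_le_distInf _ _ i) hdist
      have hd1 : L ^ j ∣ (a i - b i).val := dvd_val_sub hL hjN ha hb i
      have hd2 : L ^ j ∣ (b i - a i).val := dvd_val_sub hL hjN hb ha i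
      by_cases hcase : (a i - b i).val ≤ R * L ^ j
      · obtain ⟨q, hq⟩ := hd1
        have hdiv : (a i - b i).val / L ^ j = q := by rw [hq]; exact Nat.mul_div_cancel_left q hjpos
        have hqR : q ≤ R := by
          by_contra hc
          push_neg at hc
          have : R * L ^ j < L ^ j * q := by
            calc R * L ^ j < (R + 1) * L ^ j := by nlinarith
              _ ≤ q * L ^ j := Nat.mul_le_mul_right _ (by omega)
              _ = L ^ j * q := by ring
          omega
        constructor
        · rw [hk]
          simp only [if_pos hcase, hdiv, Finset.mem_Icc]
          omega
        · rw [hk]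
          simp only [if_pos hcase, hdiv]
          have : ((L ^ j * (q : ℤ) : ℤ) : ZMod (L ^ N)) = (((a i - b i).val : ℕ) : ZMod (L ^ N)) := by
            rw [hq]; push_cast; ring
          rw [this, natCast_val_eq hL hjN]
          ring
      · have hcase2 : (b i - a i).val ≤ R * L ^ j := by
          rcases min_le_iff.mp hzd with h | h
          · omega
          · exact h
        obtain ⟨q, hq⟩ := hd2
        have hdiv : (b i - a i).val / L ^ j = q := by rw [hq]; exact Nat.mul_div_cancel_left q hjpos
        have hqR : q ≤ R := by
          by_contra hc
          push_neg at hc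
          have : R * L ^ j < L ^ j * q := by
            calc R * L ^ j < (R + 1) * L ^ j := by nlinarith
              _ ≤ q * L ^ j := Nat.mul_le_mul_right _ (by omega)
              _ = L ^ j * q := by ring
          omega
        constructor
        · rw [hk]
          simp only [if_neg hcase, hdiv, Finset.mem_Icc]
          omega
        · rw [hk]
          simp only [if_neg hcase, hdiv]
          have : ((L ^ j * (-(q : ℤ)) : ℤ) : ZMod (L ^ N)) = -(((b i - a i).val : ℕ) : ZMod (L ^ N)) := by
            rw [hq]; push_cast; ring
          rw [this, natCast_val_eq hL hjN]
          ring
    refine ⟨k, ?_, ?_⟩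
    · rw [Finset.mem_coe, hT, Fintype.mem_piFinset]
      exact fun i => (hprop i).1
    · funext i
      exact (hprop i).2
  calc {a : Torus d L N | IsAnchor j a ∧ distInf a b ≤ R * L ^ j}.ncard
      ≤ (g '' ↑T).ncard := Set.ncard_le_ncard hsub (Set.toFinite _)
    _ ≤ (↑T : Set (Fin d → ℤ)).ncard := Set.ncard_image_le (Set.toFinite _)
    _ = T.card := Set.ncard_coe_finset _
    _ ≤ (2 * R + 1) ^ d := by
        rw [hT, Fintype.card_piFinset]
        have h1 : (Finset.Icc (-(R : ℤ)) (R : ℤ)).card = 2 * R + 1 := by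
          rw [Int.card_Icc]
          omega
        have h2 : (∏ _i : Fin d, (Finset.Icc (-(R : ℤ)) (R : ℤ)).card) = (2 * R + 1) ^ d := by
          rw [Finset.prod_congr rfl (fun i _ => h1), Finset.prod_const]
          simp
        omega

/-- every anchor of `ssn X` is within distance `2^d * L^j` of an anchor of `X`. -/
lemma anch_ssn_subset {X : Set (Torus d L N)} (hX : IsPolymer d L N j X) :
    anch j (ssn d L N j X) ⊆
      ⋃ b ∈ anch j X, {a : Torus d L N | IsAnchor j a ∧ distInf a b ≤ 2 ^ d * L ^ j} := by
  rintro a ⟨ha, haS⟩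
  have haa : a ∈ ssn d L N j X := haS (self_mem_Blk hL hjN a)
  obtain ⟨Y, ⟨hYsmall, hYX⟩, haY⟩ := haa
  obtain ⟨x₀, hx₀Y, hx₀X⟩ := hYX
  have hb : anchorOf j x₀ ∈ anch j X :=
    ⟨anchorOf_isAnchor hL hjN _, polymer_blk_subset hL hjN hX hx₀X⟩
  refine Set.mem_biUnion hb ⟨ha, ?_⟩
  have heq : anchorOf j a = a := (anchor_unique hL hjN ha (self_mem_Blk hL hjN a)).symm
  have hcard : (anch j Y).ncard ≤ 2 ^ d := by
    have := hYsmall.2.2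
    rw [size_eq hL Y hjN] at this
    exact this
  calc distInf a (anchorOf j x₀) = distInf (anchorOf j a) (anchorOf j x₀) := by rw [heq]
    _ ≤ ((anch j Y).ncard - 1) * L ^ j :=
        anch_dist_of_connected hL hjN hYsmall.1 hYsmall.2.1 haY hx₀Y
    _ ≤ 2 ^ d * L ^ j := Nat.mul_le_mul_right _ (by omega)
omit hL hjN in
lemma ncard_le_sum {α β : Type*} [DecidableEq β] (F : Finset α) (f : α → Set β) (s : Set β)
    (hfin : ∀ a, (f a).Finite) (hsub : s ⊆ ⋃ a ∈ F, f a) :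
    s.ncard ≤ ∑ a ∈ F, (f a).ncard := by
  classical
  have h1 : s ⊆ ↑(F.biUnion fun a => (hfin a).toFinset) := by
    intro x hx
    obtain ⟨a, ha, hxa⟩ := Set.mem_iUnion₂.mp (hsub hx)
    simp only [Finset.coe_biUnion, Set.mem_iUnion, Finset.mem_coe, Set.Finite.mem_toFinset]
    exact ⟨a, ha, hxa⟩
  calc s.ncard ≤ (↑(F.biUnion fun a => (hfin a).toFinset) : Set β).ncard :=
        Set.ncard_le_ncard h1 (Set.toFinite _)
    _ = (F.biUnion fun a => (hfin a).toFinset).card := Set.ncard_coe_finset _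
    _ ≤ ∑ a ∈ F, ((hfin a).toFinset).card := Finset.card_biUnion_le
    _ = ∑ a ∈ F, (f a).ncard := by
        apply Finset.sum_congr rfl
        intro a _
        rw [Set.ncard_eq_toFinset_card _ (hfin a)]

lemma anch_ssn_card {X : Set (Torus d L N)} (hX : IsPolymer d L N j X) :
    (anch j (ssn d L N j X)).ncard ≤ (2 * 2 ^ d + 1) ^ d * (anch j X).ncard := by
  haveI := neZero_LN hL hjN
  haveI : Finite (Torus d L N) := by
    haveI := ZMod.fintype (L ^ N)
    infer_instance
  classical
  set F := (anch j X).toFinite.toFinset with hF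
  have hsub : anch j (ssn d L N j X) ⊆
      ⋃ b ∈ F, {a : Torus d L N | IsAnchor j a ∧ distInf a b ≤ 2 ^ d * L ^ j} := by
    intro a ha
    obtain ⟨b, hb, hab⟩ := Set.mem_iUnion₂.mp (anch_ssn_subset hL hjN hX ha)
    exact Set.mem_iUnion₂.mpr ⟨b, (anch j X).toFinite.mem_toFinset.mpr hb, hab⟩
  calc (anch j (ssn d L N j X)).ncard
      ≤ ∑ b ∈ F, ({a : Torus d L N | IsAnchor j a ∧ distInf a b ≤ 2 ^ d * L ^ j}).ncard :=
        ncard_le_sum F _ _ (fun _ => Set.toFinite _) hsub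
    _ ≤ ∑ _b ∈ F, (2 * 2 ^ d + 1) ^ d := by
        apply Finset.sum_le_sum
        intro b hb
        exact ball_count hL hjN ((((anch j X).toFinite.mem_toFinset.mp hb)).1) (2 ^ d)
    _ = F.card * (2 * 2 ^ d + 1) ^ d := by rw [Finset.sum_const, smul_eq_mul]
    _ = (2 * 2 ^ d + 1) ^ d * (anch j X).ncard := by
        rw [hF, Set.ncard_eq_toFinset_card _ (anch j X).toFinite]
        ring

lemma size_union_le {A B : Set (Torus d L N)} (hA : IsPolymer d L N j A)
    (hB : IsPolymer d L N j B) :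
    size d L N j (A ∪ B) ≤ size d L N j A + size d L N j B := by
  haveI := neZero_LN hL hjN
  haveI : Finite (Torus d L N) := by
    haveI := ZMod.fintype (L ^ N)
    infer_instance
  rw [size_eq hL _ hjN, size_eq hL _ hjN, size_eq hL _ hjN]
  have hsub : anch j (A ∪ B) ⊆ anch j A ∪ anch j B := by
    rintro a ⟨ha, haU⟩
    have haa : a ∈ A ∪ B := haU (self_mem_Blk hL hjN a)
    have heq : anchorOf j a = a := (anchor_unique hL hjN ha (self_mem_Blk hL hjN a)).symm
    rcases haa with h | h
    · exact Or.inl ⟨ha, heq ▸ polymer_blk_subset hL hjN hA h⟩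
    · exact Or.inr ⟨ha, heq ▸ polymer_blk_subset hL hjN hB h⟩
  calc (anch j (A ∪ B)).ncard ≤ (anch j A ∪ anch j B).ncard :=
        Set.ncard_le_ncard hsub (Set.toFinite _)
    _ ≤ _ := Set.ncard_union_le _ _

lemma size_le_sum_comps {U : Set (Torus d L N)} (hU : IsPolymer d L N j U)
    (G : Finset (Set (Torus d L N))) (hG : ↑G = Comp U) :
    size d L N j U ≤ ∑ Y ∈ G, size d L N j Y := by
  haveI := neZero_LN hL hjN
  haveI : Finite (Torus d L N) := by
    haveI := ZMod.fintype (L ^ N)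
    infer_instance
  classical
  rw [size_eq hL _ hjN]
  have hsub : anch j U ⊆ ⋃ Y ∈ G, anch j Y := by
    intro a ha
    obtain ⟨Y, hY, haY⟩ := Set.mem_iUnion₂.mp (anch_subset_comps hL hjN hU ha)
    exact Set.mem_iUnion₂.mpr ⟨Y, by rw [← hG] at hY; exact Finset.mem_coe.mp hY, haY⟩
  calc (anch j U).ncard ≤ ∑ Y ∈ G, (anch j Y).ncard :=
        ncard_le_sum _ _ _ (fun _ => Set.toFinite _) hsub
    _ = ∑ Y ∈ G, size d L N j Y := by
        apply Finset.sum_congr rfl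
        intro Y _
        rw [size_eq hL _ hjN]

lemma anch_blk {a : Torus d L N} (ha : IsAnchor j a) : anch j (Blk j a) = {a} := by
  ext a'
  constructor
  · rintro ⟨ha', hsub⟩
    have h1 : a' = anchorOf j a' := anchor_unique hL hjN ha' (self_mem_Blk hL hjN a')
    have h2 : a = anchorOf j a' := anchor_unique hL hjN ha (hsub (self_mem_Blk hL hjN a'))
    rw [Set.mem_singleton_iff, h1, h2]
  · rintro rfl
    exact ⟨ha, le_refl _⟩

lemma blk_small {a : Torus d L N} (ha : IsAnchor j a) : IsSmallSet d L N j (Blk j a) := by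
  refine ⟨Blk_polymer hL hjN ha, blk_connected hL hjN a, ?_⟩
  rw [size_eq hL _ hjN, anch_blk hL hjN ha, Set.ncard_singleton]
  exact Nat.one_le_two_pow

lemma ssn_nonempty {X : Set (Torus d L N)} (hX : IsPolymer d L N j X)
    (hne : X.Nonempty) : (ssn d L N j X).Nonempty := by
  obtain ⟨y, hy⟩ := hne
  refine ⟨y, Set.mem_sUnion.mpr ⟨Blk j (anchorOf j y), ⟨blk_small hL hjN (anchorOf_isAnchor hL hjN y), ⟨y, mem_Blk_anchorOf hL hjN y, hy⟩⟩, mem_Blk_anchorOf hL hjN y⟩⟩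

lemma size_pos {X : Set (Torus d L N)} (hX : IsPolymer d L N j X) (hne : X.Nonempty) :
    1 ≤ size d L N j X := by
  haveI := neZero_LN hL hjN
  haveI : Finite (Torus d L N) := by
    haveI := ZMod.fintype (L ^ N)
    infer_instance
  rw [size_eq hL _ hjN]
  obtain ⟨y, hy⟩ := hne
  have : anchorOf j y ∈ anch j X :=
    ⟨anchorOf_isAnchor hL hjN y, polymer_blk_subset hL hjN hX hy⟩
  have := (Set.ncard_pos (Set.toFinite _)).mpr ⟨_, this⟩
  omega

end Basics

set_option maxHeartbeats 1000000 in
/-- **Lemma C.6 (Y0)**: for `0 < z < 2z'` there exists `c > 0`, depending only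
on `d`, `z` and `z'`, such that for all `ain ∈ (0,c)` and `aout ∈ [0,ain]`,
all `L > 2^d`, `j < N`, every polymer `W` and every triple
`(X,(U_B),U_M) ∈ 𝒴₀(W)`, writing `U_{M,i}` for the connected components of
`U_M`, one has
`z'·|X|_j + Σᵢ f_j(z,ain,U_{M,i}) ≥ (ain − aout)·|W|_j + f_j(z,aout,W)`. -/
theorem lemma_Y0 (d : ℕ) (hd : 1 ≤ d) (z z' : ℝ) (hz : 0 < z) (hzz' : z < 2 * z') :
    ∃ c : ℝ, 0 < c ∧
      ∀ (L N j : ℕ), 2 ^ d < L → j < N →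
        ∀ ain aout : ℝ, 0 < ain → ain < c → 0 ≤ aout → aout ≤ ain →
          ∀ W : Set (Torus d L N), IsPolymer d L N j W →
            ∀ t ∈ Ycal0 d L N j W,
              (ain - aout) * (size d L N j W : ℝ) + fwt d L N j z aout W ≤
                z' * (size d L N j t.1 : ℝ) +
                  ∑ᶠ Y ∈ Comp t.2.2, fwt d L N j z ain Y := by
  classical
  set K : ℝ := (((2 * 2 ^ d + 1) ^ d : ℕ) : ℝ) with hKdef
  have hKpos : 0 < K := by
    rw [hKdef]
    have h0 : 0 < (2 * 2 ^ d + 1) ^ d := pow_pos (by omega) d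
    exact_mod_cast h0
  refine ⟨min ((2 * z' - z) / (2 * K)) (z / 2 ^ (d + 1)), lt_min (div_pos (by linarith) (by positivity)) (by positivity), ?_⟩
  intro L N j hLd hjN ain aout hain hainc haout haa W hWp t ht
  have hL : 2 ≤ L := by
    have h2d : 2 ≤ 2 ^ d := by
      calc 2 = 2 ^ 1 := (pow_one 2).symm
        _ ≤ 2 ^ d := Nat.pow_le_pow_right (by omega) hd
    omega
  haveI := neZero_LN hL hjN
  haveI : Finite (Torus d L N) := by
    haveI := ZMod.fintype (L ^ N)
    infer_instance
  obtain ⟨⟨hXp, hUc, hMp, hnt, hWeq⟩, hXne, hnot⟩ := ht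
  set X := t.1 with hX
  set UM := t.2.2 with hUM
  set G := (Comp UM).toFinite.toFinset with hG
  have hGc : ↑G = Comp UM := Set.Finite.coe_toFinset _
  have hsum : ∑ᶠ Y ∈ Comp UM, fwt d L N j z ain Y = ∑ Y ∈ G, fwt d L N j z ain Y := by
    rw [← hGc, finsum_mem_coe_finset]
  have hXnon : X.Nonempty := Set.nonempty_iff_ne_empty.mpr hXne
  have hx1 : 1 ≤ size d L N j X := size_pos hL hjN hXp hXnon
  have hcomp_ne : ∀ Y ∈ G, Y ≠ ∅ := by
    intro Y hY
    have hYc : Y ∈ Comp UM := (Set.Finite.mem_toFinset _).mp hY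
    exact Set.nonempty_iff_ne_empty.mp hYc.2.1.1
  have hfwtY : ∀ Y ∈ G, fwt d L N j z ain Y = z + ain * max ((size d L N j Y : ℝ) - 2 ^ d) 0 := by
    intro Y hY
    rw [fwt, if_neg (hcomp_ne Y hY)]
  have hWne : W ≠ ∅ := by
    rw [← hWeq]
    apply Set.nonempty_iff_ne_empty.mp
    exact Set.Nonempty.inl (ssn_nonempty hL hjN hXp hXnon)
  have hfwtW : fwt d L N j z aout W = z + aout * max ((size d L N j W : ℝ) - 2 ^ d) 0 := by
    rw [fwt, if_neg hWne]
  -- size bound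
  have h1 : size d L N j W ≤ (2 * 2 ^ d + 1) ^ d * size d L N j X + ∑ Y ∈ G, size d L N j Y := by
    have e1 : size d L N j W = size d L N j (ssn d L N j X ∪ UM) := by rw [hWeq]
    have e2 : size d L N j (ssn d L N j X ∪ UM) ≤ size d L N j (ssn d L N j X) + size d L N j UM :=
      size_union_le hL hjN (ssn_polymer hL hjN X) hMp
    have e3 : size d L N j (ssn d L N j X) ≤ (2 * 2 ^ d + 1) ^ d * size d L N j X := by
      rw [size_eq hL _ hjN, size_eq hL _ hjN]
      exact anch_ssn_card hL hjN hXp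
    have e4 : size d L N j UM ≤ ∑ Y ∈ G, size d L N j Y := size_le_sum_comps hL hjN hMp G hGc
    omega
  -- x + n ≥ 2
  have hxn : 2 ≤ size d L N j X + G.card := by
    rcases Nat.lt_or_ge (size d L N j X) 2 with hx2 | hx2
    · have hxeq : size d L N j X = 1 := by omega
      have hMne : UM ≠ ∅ := fun hc => hnot ⟨hxeq, hc⟩
      have : (Comp UM).Nonempty := comps_nonempty (Set.nonempty_iff_ne_empty.mpr hMne)
      have : G.Nonempty := (Set.Finite.toFinset_nonempty _).mpr this
      have := Finset.card_pos.mpr this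
      omega
    · omega
  -- real arithmetic
  set xR : ℝ := (size d L N j X : ℝ) with hxR
  set wR : ℝ := (size d L N j W : ℝ) with hwR
  set nR : ℝ := (G.card : ℝ) with hnR
  set S : ℝ := ∑ Y ∈ G, (size d L N j Y : ℝ) with hS
  set Smax : ℝ := ∑ Y ∈ G, max ((size d L N j Y : ℝ) - 2 ^ d) 0 with hSmax
  have hSmax_nonneg : 0 ≤ Smax := Finset.sum_nonneg fun Y _ => le_max_right _ _
  have hrhs : z' * xR + ∑ᶠ Y ∈ Comp UM, fwt d L N j z ain Y
      = z' * xR + nR * z + ain * Smax := by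
    rw [hsum, Finset.sum_congr rfl hfwtY, Finset.sum_add_distrib, Finset.sum_const,
      ← Finset.mul_sum, ← hSmax]
    push_cast
    ring
  have hw_le : wR ≤ K * xR + S := by
    rw [hwR, hxR, hS, hKdef, ← Nat.cast_sum]
    exact_mod_cast h1
  have hS_le : S ≤ Smax + nR * 2 ^ d := by
    rw [hS, hSmax, hnR]
    calc ∑ Y ∈ G, (size d L N j Y : ℝ)
        ≤ ∑ Y ∈ G, (max ((size d L N j Y : ℝ) - 2 ^ d) 0 + 2 ^ d) := by
          apply Finset.sum_le_sum
          intro Y _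
          have := le_max_left ((size d L N j Y : ℝ) - 2 ^ d) 0
          linarith
      _ = (∑ Y ∈ G, max ((size d L N j Y : ℝ) - 2 ^ d) 0) + G.card * 2 ^ d := by
          rw [Finset.sum_add_distrib, Finset.sum_const]
          push_cast
          ring
  have hainK : ain * K ≤ z' - z / 2 := by
    have h := lt_of_lt_of_le hainc (min_le_left _ _)
    have : ain * (2 * K) < 2 * z' - z := by
      rw [← lt_div_iff₀ (by positivity)]
      exact h
    linarith
  have hain2 : ain * 2 ^ d ≤ z / 2 := by
    have h := lt_of_lt_of_le hainc (min_le_right _ _)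
    have h2 : ain * 2 ^ (d + 1) < z := by
      rw [← lt_div_iff₀ (by positivity)]
      exact h
    have : (2 : ℝ) ^ (d + 1) = 2 * 2 ^ d := by ring
    nlinarith [pow_pos (show (0:ℝ) < 2 by norm_num) d]
  have hwnn : (0:ℝ) ≤ wR := by rw [hwR]; positivity
  have hxR1 : (1:ℝ) ≤ xR := by rw [hxR]; exact_mod_cast hx1
  have hnR0 : (0:ℝ) ≤ nR := by rw [hnR]; positivity
  have hxnR : (2:ℝ) ≤ xR + nR := by
    rw [hxR, hnR]
    exact_mod_cast hxn
  -- LHS bound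
  have hlhs : (ain - aout) * wR + fwt d L N j z aout W ≤ ain * wR + z := by
    rw [hfwtW]
    have hmax : max (wR - 2 ^ d) 0 ≤ wR := by
      apply max_le
      · have : (0:ℝ) ≤ 2 ^ d := by positivity
        linarith
      · exact hwnn
    have := mul_le_mul_of_nonneg_left hmax haout
    linarith
  have hmain : ain * wR + z ≤ z' * xR + nR * z + ain * Smax := by
    have s1 : ain * wR ≤ ain * (K * xR + S) := mul_le_mul_of_nonneg_left hw_le (le_of_lt hain)
    have s2 : ain * (K * xR + S) ≤ ain * (K * xR + Smax + nR * 2 ^ d) := by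
      apply mul_le_mul_of_nonneg_left _ (le_of_lt hain)
      linarith
    have s3 : ain * K * xR ≤ (z' - z / 2) * xR :=
      mul_le_mul_of_nonneg_right hainK (by linarith)
    have s4 : ain * 2 ^ d * nR ≤ (z / 2) * nR :=
      mul_le_mul_of_nonneg_right hain2 hnR0
    have s5 : z / 2 * 2 ≤ z / 2 * (xR + nR) := mul_le_mul_of_nonneg_left hxnR (by linarith)
    have s6 : ain * (K * xR + Smax + nR * 2 ^ d)
        = ain * K * xR + ain * Smax + ain * 2 ^ d * nR := by ring
    linarith [s1, s2, s3, s4, s5, s6]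
  calc (ain - aout) * wR + fwt d L N j z aout W ≤ ain * wR + z := hlhs
    _ ≤ z' * xR + nR * z + ain * Smax := hmain
    _ = z' * xR + ∑ᶠ Y ∈ Comp UM, fwt d L N j z ain Y := hrhs.symm

end PaperT
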